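/- arXiv:1905.04049 — 2 statements merged into one kernel-verified Lean document; each statement's English description precedes it below -/
import Mathlib

section
/- Assume μ2 > 0. Every point of the curve ℛ lies on the following branch of hyperbola: for real θ1 ≤ θ1⁻ and θ2 = Θ2⁺(θ1) or θ2 = Θ2⁻(θ1), writing x = Re θ2 and y = Im θ2, one has σ22(σ12² − σ11σ22)x² + σ12²σ22 y² − 2σ22(σ11μ2 − σ12μ1)x = μ2(σ11μ2 − 2σ12μ1). -/
/-- The complex discriminant `d(θ1)`. -/
noncomputable def discrim1C (σ11 σ12 σ22 μ1 μ2 : ℝ) (θ1 : ℂ) : ℂ :=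
  ((σ12^2 - σ11 * σ22 : ℝ) : ℂ) * θ1^2
    + 2 * ((μ2 * σ12 - μ1 * σ22 : ℝ) : ℂ) * θ1 + ((μ2^2 : ℝ) : ℂ)

/-- The branch `Θ2⁺`, defined with the principal square root. -/
noncomputable def Theta2plus (σ11 σ12 σ22 μ1 μ2 : ℝ) (θ1 : ℂ) : ℂ :=
  (-((σ12 : ℂ) * θ1 + (μ2 : ℂ))
    + (discrim1C σ11 σ12 σ22 μ1 μ2 θ1) ^ ((1 : ℂ)/2)) / (σ22 : ℂ)

/-- The branch `Θ2⁻`, defined with the principal square root. -/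
noncomputable def Theta2minus (σ11 σ12 σ22 μ1 μ2 : ℝ) (θ1 : ℂ) : ℂ :=
  (-((σ12 : ℂ) * θ1 + (μ2 : ℂ))
    - (discrim1C σ11 σ12 σ22 μ1 μ2 θ1) ^ ((1 : ℂ)/2)) / (σ22 : ℂ)

/-- The branch point `θ1⁻`. -/
noncomputable def theta1minus (σ11 σ12 σ22 μ1 μ2 : ℝ) : ℝ :=
  ((μ2 * σ12 - μ1 * σ22)
    - Real.sqrt ((μ2 * σ12 - μ1 * σ22)^2 + μ2^2 * (σ11 * σ22 - σ12^2)))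
  / (σ11 * σ22 - σ12^2)

/-! For `θ1 ≤ θ1⁻` the discriminant `d(θ1)` is a nonpositive real, and every complex square
root of a nonpositive real is purely imaginary. Hence on both branches
`σ22 Re θ2 = −(σ12 θ1 + μ2)` and `(σ22 Im θ2)² = −d(θ1)`; substituting these into `σ22` times
the equation of the hyperbola leaves an identity in `θ1`. -/

lemma Complex.re_eq_zero_of_sq_eq_ofReal_nonpos {w : ℂ} {d : ℝ} (hw : w ^ 2 = d) (hd : d ≤ 0) :
    w.re = 0 ∧ w.im ^ 2 = -d := by
  have hre : w.re ^ 2 - w.im ^ 2 = d := by simpa [sq] using congrArg Complex.re hw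
  have him : w.re * w.im + w.im * w.re = 0 := by simpa [sq] using congrArg Complex.im hw
  have hre0 : w.re = 0 := by
    rcases mul_eq_zero.1 (show w.re * w.im = 0 by linarith) with h | h
    · exact h
    · rw [h] at hre
      exact pow_eq_zero_iff two_ne_zero |>.1 (by nlinarith [sq_nonneg w.re])
  exact ⟨hre0, by rw [hre0] at hre; linarith⟩

section Branches

variable (σ11 σ12 σ22 μ1 μ2 : ℝ)

noncomputable def discrim1 (θ1 : ℝ) : ℝ :=
  (σ12^2 - σ11 * σ22) * θ1^2 + 2 * (μ2 * σ12 - μ1 * σ22) * θ1 + μ2^2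

variable {σ11 σ12 σ22 μ1 μ2}

lemma discrim1C_ofReal (θ1 : ℝ) :
    discrim1C σ11 σ12 σ22 μ1 μ2 θ1 = discrim1 σ11 σ12 σ22 μ1 μ2 θ1 := by
  simp only [discrim1C, discrim1]
  push_cast
  ring

lemma discrim1_nonpos_of_le_theta1minus (hdet : 0 < σ11 * σ22 - σ12^2) {θ1 : ℝ}
    (hθ1 : θ1 ≤ theta1minus σ11 σ12 σ22 μ1 μ2) : discrim1 σ11 σ12 σ22 μ1 μ2 θ1 ≤ 0 := by
  set D := σ11 * σ22 - σ12^2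
  set b := μ2 * σ12 - μ1 * σ22
  set r := Real.sqrt (b^2 + μ2^2 * D)
  have hr : r ^ 2 = b^2 + μ2^2 * D := Real.sq_sqrt (by positivity)
  have hDθ1 : D * θ1 ≤ b - r := by
    rw [theta1minus, le_div_iff₀ hdet] at hθ1
    linarith
  -- `D · d(θ1) = r² - (b - Dθ1)²`, and `b - Dθ1 ≥ r ≥ 0`.
  have hsq : r ^ 2 ≤ (b - D * θ1) ^ 2 := pow_le_pow_left₀ (Real.sqrt_nonneg _) (by linarith) 2
  have hD : D * discrim1 σ11 σ12 σ22 μ1 μ2 θ1 ≤ 0 := by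
    simp only [discrim1]
    linear_combination hsq - hr
  exact nonpos_of_mul_nonpos_right hD hdet

lemma re_im_of_eq_Theta2 (hσ22 : σ22 ≠ 0) {θ1 : ℝ} (hd : discrim1 σ11 σ12 σ22 μ1 μ2 θ1 ≤ 0)
    {θ2 : ℂ} (hθ2 : θ2 = Theta2plus σ11 σ12 σ22 μ1 μ2 θ1 ∨ θ2 = Theta2minus σ11 σ12 σ22 μ1 μ2 θ1) :
    σ22 * θ2.re = -(σ12 * θ1 + μ2) ∧ (σ22 * θ2.im) ^ 2 = -discrim1 σ11 σ12 σ22 μ1 μ2 θ1 := by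
  have hw : (discrim1C σ11 σ12 σ22 μ1 μ2 θ1 ^ ((1 : ℂ) / 2)) ^ 2 = discrim1 σ11 σ12 σ22 μ1 μ2 θ1 := by
    rw [one_div, Complex.cpow_ofNat_inv_pow, discrim1C_ofReal]
  set w := discrim1C σ11 σ12 σ22 μ1 μ2 θ1 ^ ((1 : ℂ) / 2)
  obtain ⟨hre, him⟩ := Complex.re_eq_zero_of_sq_eq_ofReal_nonpos hw hd
  have hσ22C : (σ22 : ℂ) ≠ 0 := by exact_mod_cast hσ22
  have hmul : (σ22 : ℂ) * θ2 = -(σ12 * θ1 + μ2) + w ∨ (σ22 : ℂ) * θ2 = -(σ12 * θ1 + μ2) - w := by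
    rcases hθ2 with rfl | rfl
    · left; rw [Theta2plus, mul_div_cancel₀ _ hσ22C]
    · right; rw [Theta2minus, mul_div_cancel₀ _ hσ22C]
  rcases hmul with h | h <;>
  · obtain ⟨h_re, h_im⟩ := Complex.ext_iff.1 h
    simp [hre] at h_re h_im
    exact ⟨by linarith, by rw [h_im]; simpa using him⟩

lemma hyperbola_of_re_im (hσ22 : σ22 ≠ 0) {θ1 x y : ℝ} (hx : σ22 * x = -(σ12 * θ1 + μ2))
    (hy : (σ22 * y) ^ 2 = -discrim1 σ11 σ12 σ22 μ1 μ2 θ1) :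
    σ22 * (σ12^2 - σ11 * σ22) * x^2 + σ12^2 * σ22 * y^2
      - 2 * σ22 * (σ11 * μ2 - σ12 * μ1) * x = μ2 * (σ11 * μ2 - 2 * σ12 * μ1) := by
  simp only [discrim1] at hy
  refine mul_left_cancel₀ hσ22 ?_
  linear_combination σ12^2 * hy + ((σ12^2 - σ11 * σ22) * (σ22 * x - (σ12 * θ1 + μ2))
    - 2 * σ22 * (σ11 * μ2 - σ12 * μ1)) * hx

end Branches

theorem stmt_5_general (σ11 σ12 σ22 μ1 μ2 : ℝ) (hσ22 : 0 < σ22)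
    (hdet : 0 < σ11 * σ22 - σ12^2) :
    ∀ θ1 : ℝ, θ1 ≤ theta1minus σ11 σ12 σ22 μ1 μ2 →
      ∀ θ2 : ℂ, (θ2 = Theta2plus σ11 σ12 σ22 μ1 μ2 (θ1 : ℂ) ∨
                 θ2 = Theta2minus σ11 σ12 σ22 μ1 μ2 (θ1 : ℂ)) →
        σ22 * (σ12^2 - σ11 * σ22) * θ2.re^2 + σ12^2 * σ22 * θ2.im^2
          - 2 * σ22 * (σ11 * μ2 - σ12 * μ1) * θ2.re
          = μ2 * (σ11 * μ2 - 2 * σ12 * μ1) := by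
  intro θ1 hθ1 θ2 hθ2
  obtain ⟨hx, hy⟩ :=
    re_im_of_eq_Theta2 hσ22.ne' (discrim1_nonpos_of_le_theta1minus hdet hθ1) hθ2
  exact hyperbola_of_re_im hσ22.ne' hx hy

/-- Every point of the curve `ℛ` lies on the branch of hyperbola
`σ22(σ12² − σ11σ22)x² + σ12²σ22 y² − 2σ22(σ11μ2 − σ12μ1)x = μ2(σ11μ2 − 2σ12μ1)`. -/
theorem stmt_5 (σ11 σ12 σ22 μ1 μ2 : ℝ) (hσ11 : 0 < σ11) (hσ22 : 0 < σ22)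
    (hdet : 0 < σ11 * σ22 - σ12^2) (hμ2 : 0 < μ2) :
    ∀ θ1 : ℝ, θ1 ≤ theta1minus σ11 σ12 σ22 μ1 μ2 →
      ∀ θ2 : ℂ, (θ2 = Theta2plus σ11 σ12 σ22 μ1 μ2 (θ1 : ℂ) ∨
                 θ2 = Theta2minus σ11 σ12 σ22 μ1 μ2 (θ1 : ℂ)) →
        σ22 * (σ12^2 - σ11 * σ22) * θ2.re^2 + σ12^2 * σ22 * θ2.im^2
          - 2 * σ22 * (σ11 * μ2 - σ12 * μ1) * θ2.re
          = μ2 * (σ11 * μ2 - 2 * σ12 * μ1) :=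
  stmt_5_general σ11 σ12 σ22 μ1 μ2 hσ22 hdet
end

section
/- Assume μ1 > 0, μ2 > 0 and let r12, r21 ∈ ℝ. For every real θ1 < θ1⁻, set θ2 = Θ2⁻(θ1) ∈ ℛ; if γ1(θ1, θ2) ≠ 0 and γ2(θ1, θ2) ≠ 0, then the boundary-condition coefficient G(θ2) = [γ1(Θ1⁻(θ2), θ2) / γ2(Θ1⁻(θ2), θ2)] · [γ2(Θ1⁻(θ2), conj(θ2)) / γ1(Θ1⁻(θ2), conj(θ2))] has modulus one: |G(θ2)| = 1. -/
/-- The complex discriminant `D(θ2)`. -/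
noncomputable def discrim2C (σ11 σ12 σ22 μ1 μ2 : ℝ) (θ2 : ℂ) : ℂ :=
  ((σ12^2 - σ11 * σ22 : ℝ) : ℂ) * θ2^2
    + 2 * ((μ1 * σ12 - μ2 * σ11 : ℝ) : ℂ) * θ2 + ((μ1^2 : ℝ) : ℂ)

/-- The branch `Θ1⁻`. -/
noncomputable def Theta1minus (σ11 σ12 σ22 μ1 μ2 : ℝ) (θ2 : ℂ) : ℂ :=
  (-((σ12 : ℂ) * θ2 + (μ1 : ℂ))
    - (discrim2C σ11 σ12 σ22 μ1 μ2 θ2) ^ ((1 : ℂ)/2)) / (σ11 : ℂ)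

/-- The curve `ℛ = Θ2±((-∞, θ1⁻])`. -/
noncomputable def curveR (σ11 σ12 σ22 μ1 μ2 : ℝ) : Set ℂ :=
  {z : ℂ | ∃ t : ℝ, t ≤ theta1minus σ11 σ12 σ22 μ1 μ2 ∧
    (z = Theta2plus σ11 σ12 σ22 μ1 μ2 (t : ℂ) ∨
     z = Theta2minus σ11 σ12 σ22 μ1 μ2 (t : ℂ))}


/-- The linear form `γ1(θ1, θ2) = θ1 + r21 θ2`, with complex arguments. -/
noncomputable def gamma1C (r21 : ℝ) (θ1 θ2 : ℂ) : ℂ := θ1 + (r21 : ℂ) * θ2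

/-- The linear form `γ2(θ1, θ2) = r12 θ1 + θ2`, with complex arguments. -/
noncomputable def gamma2C (r12 : ℝ) (θ1 θ2 : ℂ) : ℂ := (r12 : ℂ) * θ1 + θ2

/-
For `θ1 < θ1⁻` the discriminant `d(θ1)` is negative, so `θ2 = Θ2⁻(θ1)` has real part
`-(σ12 θ1 + μ2)/σ22`. The pair `(θ1, θ2)` is a zero of the kernel, so `D(θ2)` is the square of
`-(σ11 θ1 + σ12 θ2 + μ1)`, whose real part `(μ2σ12 − μ1σ22 − det Σ · θ1)/σ22` is positive below
`θ1⁻`; hence the principal root in `Θ1⁻` is exactly this number and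
`Θ1⁻(θ2) = θ1` is real. Since `θ1` and the `r_ij` are real, `γ_i(θ1, conj θ2) = conj γ_i(θ1, θ2)`,
and `G(θ2) = (a / b) · (conj b / conj a)` has modulus one.
-/

open Complex ComplexConjugate

/-- Twice the kernel `½ θ·Σθ + μ·θ`. -/
noncomputable def kernelC (σ11 σ12 σ22 μ1 μ2 : ℝ) (θ1 θ2 : ℂ) : ℂ :=
  σ11 * θ1 ^ 2 + 2 * σ12 * θ1 * θ2 + σ22 * θ2 ^ 2 + 2 * μ1 * θ1 + 2 * μ2 * θ2

lemma norm_div_mul_conj_div_conj {a b : ℂ} (ha : a ≠ 0) (hb : b ≠ 0) :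
    ‖a / b * (conj b / conj a)‖ = 1 := by
  have hna : ‖a‖ ≠ 0 := norm_ne_zero_iff.mpr ha
  have hnb : ‖b‖ ≠ 0 := norm_ne_zero_iff.mpr hb
  rw [norm_mul, norm_div, norm_div, norm_conj, norm_conj]
  field_simp

lemma gamma1C_ofReal_conj (r21 θ1 : ℝ) (θ2 : ℂ) :
    gamma1C r21 θ1 (conj θ2) = conj (gamma1C r21 θ1 θ2) := by
  simp [gamma1C]

lemma gamma2C_ofReal_conj (r12 θ1 : ℝ) (θ2 : ℂ) :
    gamma2C r12 θ1 (conj θ2) = conj (gamma2C r12 θ1 θ2) := by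
  simp [gamma2C]

section Kernel

variable {σ11 σ12 σ22 μ1 μ2 : ℝ}

lemma kernelC_Theta2minus (hσ22 : σ22 ≠ 0) (θ1 : ℂ) :
    kernelC σ11 σ12 σ22 μ1 μ2 θ1 (Theta2minus σ11 σ12 σ22 μ1 μ2 θ1) = 0 := by
  set r := discrim1C σ11 σ12 σ22 μ1 μ2 θ1 ^ ((1 : ℂ) / 2) with hr
  have hsq : r ^ 2 = (σ12 ^ 2 - σ11 * σ22) * θ1 ^ 2 + 2 * (μ2 * σ12 - μ1 * σ22) * θ1 + μ2 ^ 2 := by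
    rw [hr, one_div, cpow_ofNat_inv_pow, discrim1C]
    push_cast
    ring
  have hσ22C : (σ22 : ℂ) ≠ 0 := ofReal_ne_zero.mpr hσ22
  rw [kernelC, Theta2minus, ← hr]
  field_simp
  linear_combination hsq

lemma discrim2C_eq_sq_of_kernelC_eq_zero {θ1 θ2 : ℂ}
    (h : kernelC σ11 σ12 σ22 μ1 μ2 θ1 θ2 = 0) :
    discrim2C σ11 σ12 σ22 μ1 μ2 θ2 = (σ11 * θ1 + σ12 * θ2 + μ1) ^ 2 := by
  rw [kernelC] at h
  rw [discrim2C]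
  push_cast
  linear_combination (-σ11 : ℂ) * h

lemma Theta1minus_eq_of_kernelC_eq_zero (hσ11 : σ11 ≠ 0) {θ1 θ2 : ℂ}
    (h : kernelC σ11 σ12 σ22 μ1 μ2 θ1 θ2 = 0) (hre : 0 < (-(σ11 * θ1 + σ12 * θ2 + μ1)).re) :
    Theta1minus σ11 σ12 σ22 μ1 μ2 θ2 = θ1 := by
  have hroot : discrim2C σ11 σ12 σ22 μ1 μ2 θ2 ^ ((1 : ℂ) / 2) = -(σ11 * θ1 + σ12 * θ2 + μ1) := by
    rw [discrim2C_eq_sq_of_kernelC_eq_zero h, ← neg_sq, one_div]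
    exact sq_cpow_two_inv hre
  have hσ11C : (σ11 : ℂ) ≠ 0 := ofReal_ne_zero.mpr hσ11
  rw [Theta1minus, hroot]
  field_simp
  ring

end Kernel

section BelowBranchPoint

variable {σ11 σ12 σ22 μ1 μ2 θ1 : ℝ}

lemma sqrt_lt_of_lt_theta1minus (hdet : 0 < σ11 * σ22 - σ12 ^ 2)
    (hθ1 : θ1 < theta1minus σ11 σ12 σ22 μ1 μ2) :
    √((μ2 * σ12 - μ1 * σ22) ^ 2 + μ2 ^ 2 * (σ11 * σ22 - σ12 ^ 2)) <
      (μ2 * σ12 - μ1 * σ22) - (σ11 * σ22 - σ12 ^ 2) * θ1 := by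
  rw [theta1minus, lt_div_iff₀ hdet] at hθ1
  linarith

lemma discrim1_neg_of_lt_theta1minus (hdet : 0 < σ11 * σ22 - σ12 ^ 2)
    (hθ1 : θ1 < theta1minus σ11 σ12 σ22 μ1 μ2) :
    (σ12 ^ 2 - σ11 * σ22) * θ1 ^ 2 + 2 * (μ2 * σ12 - μ1 * σ22) * θ1 + μ2 ^ 2 < 0 := by
  have hlt := sqrt_lt_of_lt_theta1minus hdet hθ1
  have hsq := Real.sq_sqrt (by positivity :
    0 ≤ (μ2 * σ12 - μ1 * σ22) ^ 2 + μ2 ^ 2 * (σ11 * σ22 - σ12 ^ 2))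
  have hpos := Real.sqrt_nonneg ((μ2 * σ12 - μ1 * σ22) ^ 2 + μ2 ^ 2 * (σ11 * σ22 - σ12 ^ 2))
  nlinarith

/-- Below `θ1⁻` the principal root of `d(θ1) < 0` is purely imaginary. -/
lemma re_Theta2minus_of_lt_theta1minus (hdet : 0 < σ11 * σ22 - σ12 ^ 2)
    (hθ1 : θ1 < theta1minus σ11 σ12 σ22 μ1 μ2) :
    (Theta2minus σ11 σ12 σ22 μ1 μ2 θ1).re = -(σ12 * θ1 + μ2) / σ22 := by
  set d := (σ12 ^ 2 - σ11 * σ22) * θ1 ^ 2 + 2 * (μ2 * σ12 - μ1 * σ22) * θ1 + μ2 ^ 2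
  have hd : d < 0 := discrim1_neg_of_lt_theta1minus hdet hθ1
  have hroot : discrim1C σ11 σ12 σ22 μ1 μ2 θ1 ^ ((1 : ℂ) / 2) = √(-d) * I := by
    have hsq : ((√(-d) : ℂ) * I) ^ 2 = discrim1C σ11 σ12 σ22 μ1 μ2 θ1 := by
      rw [mul_pow, I_sq, ← ofReal_pow, Real.sq_sqrt (by linarith), discrim1C]
      push_cast [d]
      ring
    rw [← hsq, one_div]
    exact pow_cpow_ofNat_inv (neg_pi_div_two_lt_arg_iff.2 (.inr (by simp [Real.sqrt_nonneg])))
      (arg_le_pi_div_two_iff.2 (.inl (by simp)))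
  rw [Theta2minus, hroot, div_ofReal_re]
  simp

lemma Theta1minus_Theta2minus_of_lt_theta1minus (hσ11 : 0 < σ11) (hσ22 : 0 < σ22)
    (hdet : 0 < σ11 * σ22 - σ12 ^ 2) (hθ1 : θ1 < theta1minus σ11 σ12 σ22 μ1 μ2) :
    Theta1minus σ11 σ12 σ22 μ1 μ2 (Theta2minus σ11 σ12 σ22 μ1 μ2 θ1) = θ1 := by
  refine Theta1minus_eq_of_kernelC_eq_zero hσ11.ne' (kernelC_Theta2minus hσ22.ne' _) ?_
  have hre : σ22 * (-(σ11 * θ1 + σ12 * Theta2minus σ11 σ12 σ22 μ1 μ2 θ1 + μ1)).re =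
      (μ2 * σ12 - μ1 * σ22) - (σ11 * σ22 - σ12 ^ 2) * θ1 := by
    simp only [neg_re, add_re, mul_re, ofReal_re, ofReal_im, zero_mul, sub_zero,
      re_Theta2minus_of_lt_theta1minus hdet hθ1]
    field_simp
    ring
  have hlt := sqrt_lt_of_lt_theta1minus hdet hθ1
  have hpos := Real.sqrt_nonneg ((μ2 * σ12 - μ1 * σ22) ^ 2 + μ2 ^ 2 * (σ11 * σ22 - σ12 ^ 2))
  exact pos_of_mul_pos_right (hre ▸ hpos.trans_lt hlt) hσ22.le

end BelowBranchPoint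

theorem stmt_16_general (σ11 σ12 σ22 μ1 μ2 r12 r21 : ℝ) (hσ11 : 0 < σ11) (hσ22 : 0 < σ22)
    (hdet : 0 < σ11 * σ22 - σ12^2) :
    ∀ θ1 : ℝ, θ1 < theta1minus σ11 σ12 σ22 μ1 μ2 →
      gamma1C r21 (θ1 : ℂ) (Theta2minus σ11 σ12 σ22 μ1 μ2 (θ1 : ℂ)) ≠ 0 →
      gamma2C r12 (θ1 : ℂ) (Theta2minus σ11 σ12 σ22 μ1 μ2 (θ1 : ℂ)) ≠ 0 →
      ‖(gamma1C r21
            (Theta1minus σ11 σ12 σ22 μ1 μ2 (Theta2minus σ11 σ12 σ22 μ1 μ2 (θ1 : ℂ)))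
            (Theta2minus σ11 σ12 σ22 μ1 μ2 (θ1 : ℂ))
          / gamma2C r12
            (Theta1minus σ11 σ12 σ22 μ1 μ2 (Theta2minus σ11 σ12 σ22 μ1 μ2 (θ1 : ℂ)))
            (Theta2minus σ11 σ12 σ22 μ1 μ2 (θ1 : ℂ)))
        * (gamma2C r12
            (Theta1minus σ11 σ12 σ22 μ1 μ2 (Theta2minus σ11 σ12 σ22 μ1 μ2 (θ1 : ℂ)))
            ((starRingEnd ℂ) (Theta2minus σ11 σ12 σ22 μ1 μ2 (θ1 : ℂ)))
          / gamma1C r21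
            (Theta1minus σ11 σ12 σ22 μ1 μ2 (Theta2minus σ11 σ12 σ22 μ1 μ2 (θ1 : ℂ)))
            ((starRingEnd ℂ) (Theta2minus σ11 σ12 σ22 μ1 μ2 (θ1 : ℂ))))‖ = 1 := by
  intro θ1 hθ1 hγ1 hγ2
  rw [Theta1minus_Theta2minus_of_lt_theta1minus hσ11 hσ22 hdet hθ1, gamma1C_ofReal_conj,
    gamma2C_ofReal_conj]
  exact norm_div_mul_conj_div_conj hγ1 hγ2

/-- On the curve `ℛ`, the coefficient
`G(θ2) = [γ1(Θ1⁻(θ2), θ2)/γ2(Θ1⁻(θ2), θ2)]·[γ2(Θ1⁻(θ2), conj θ2)/γ1(Θ1⁻(θ2), conj θ2)]`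
of the boundary condition has modulus one. -/
theorem stmt_16 (σ11 σ12 σ22 μ1 μ2 r12 r21 : ℝ) (hσ11 : 0 < σ11) (hσ22 : 0 < σ22)
    (hdet : 0 < σ11 * σ22 - σ12^2) (hμ1 : 0 < μ1) (hμ2 : 0 < μ2) :
    ∀ θ1 : ℝ, θ1 < theta1minus σ11 σ12 σ22 μ1 μ2 →
      gamma1C r21 (θ1 : ℂ) (Theta2minus σ11 σ12 σ22 μ1 μ2 (θ1 : ℂ)) ≠ 0 →
      gamma2C r12 (θ1 : ℂ) (Theta2minus σ11 σ12 σ22 μ1 μ2 (θ1 : ℂ)) ≠ 0 →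
      ‖(gamma1C r21
            (Theta1minus σ11 σ12 σ22 μ1 μ2 (Theta2minus σ11 σ12 σ22 μ1 μ2 (θ1 : ℂ)))
            (Theta2minus σ11 σ12 σ22 μ1 μ2 (θ1 : ℂ))
          / gamma2C r12
            (Theta1minus σ11 σ12 σ22 μ1 μ2 (Theta2minus σ11 σ12 σ22 μ1 μ2 (θ1 : ℂ)))
            (Theta2minus σ11 σ12 σ22 μ1 μ2 (θ1 : ℂ)))
        * (gamma2C r12
            (Theta1minus σ11 σ12 σ22 μ1 μ2 (Theta2minus σ11 σ12 σ22 μ1 μ2 (θ1 : ℂ)))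
            ((starRingEnd ℂ) (Theta2minus σ11 σ12 σ22 μ1 μ2 (θ1 : ℂ)))
          / gamma1C r21
            (Theta1minus σ11 σ12 σ22 μ1 μ2 (Theta2minus σ11 σ12 σ22 μ1 μ2 (θ1 : ℂ)))
            ((starRingEnd ℂ) (Theta2minus σ11 σ12 σ22 μ1 μ2 (θ1 : ℂ))))‖ = 1 :=
  stmt_16_general σ11 σ12 σ22 μ1 μ2 r12 r21 hσ11 hσ22 hdet
end
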